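/- arXiv:2512.15351 — 2 statements merged into one kernel-verified Lean document; each statement's English description precedes it below -/
import Mathlib

section
/- Let G and H be simple graphs on disjoint vertex sets. The chromatic polynomial of their join satisfies χ_{G∇H}(t) = φ_χ[ φ_χ^{−1}[χ_G(t)] · φ_χ^{−1}[χ_H(t)] ], where φ_χ is the linear operator on polynomials with φ_χ[tⁿ] = (t)_n (falling factorial), and φ_χ^{−1}[tⁿ] = ∑_k S(n,k) t^k with S(n,k) the Stirling numbers of the second kind. -/
open Polynomial

/-- The join `G ∇ H` of two graphs on disjoint vertex sets. -/
def graphJoin {V W : Type*} (G : SimpleGraph V) (H : SimpleGraph W) : SimpleGraph (V ⊕ W) where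
  Adj x y := match x, y with
    | Sum.inl a, Sum.inl b => G.Adj a b
    | Sum.inr a, Sum.inr b => H.Adj a b
    | Sum.inl _, Sum.inr _ => True
    | Sum.inr _, Sum.inl _ => True
  symm := ⟨by rintro (a | a) (b | b) h <;> simp_all <;> exact h.symm⟩
  loopless := ⟨by rintro (a | a) h <;> simp_all⟩

/-- The number of proper colorings of `G` with `t` colors. -/
noncomputable def colorCount {V : Type*} (G : SimpleGraph V) (t : ℕ) : ℕ :=
  Nat.card (G.Coloring (Fin t))

/-- `S` is a partition of `Fin n` into nonempty blocks. -/
def IsSetPartition (n : ℕ) (S : Finset (Finset (Fin n))) : Prop :=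
  (∀ s ∈ S, s.Nonempty) ∧ ∀ x : Fin n, ∃! s, s ∈ S ∧ x ∈ s

/-- The Stirling number of the second kind `S(n,k)`. -/
noncomputable def stirling2 (n k : ℕ) : ℕ :=
  Nat.card {S : Finset (Finset (Fin n)) // S.card = k ∧ IsSetPartition n S}

/-- The linear operator `φ_χ` with `φ_χ[tⁿ] = (t)_n`, extended linearly. -/
noncomputable def phiChi (p : Polynomial ℚ) : Polynomial ℚ :=
  p.sum fun n a => a • ∏ i ∈ Finset.range n, (X - C (i : ℚ))

/-- The inverse operator `φ_χ⁻¹` with `φ_χ⁻¹[tⁿ] = ∑_k S(n,k) t^k`. -/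
noncomputable def phiChiInv (p : Polynomial ℚ) : Polynomial ℚ :=
  p.sum fun n a => a • ∑ k ∈ Finset.range (n + 1), (stirling2 n k : ℚ) • X ^ k

/-!
Let `σ_G = ∑_π X ^ |π|`, summed over the partitions `π` of the vertex set into independent
sets. Grouping the proper `t`-colourings by their colour classes gives
`χ_G(t) = ∑_π (t)_{|π|}`, that is `χ_G = φ_χ[σ_G]`. Grouping all maps `Fin n → Fin t` in the
same way gives `tⁿ = ∑_k S(n,k) (t)_k`, so `φ_χ ∘ φ_χ⁻¹ = id`; as `φ_χ` preserves leading
coefficients it is injective, hence `φ_χ⁻¹[χ_G] = σ_G`. Finally, every independent set of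
`G ∇ H` lies on one side, so the independent partitions of `G ∇ H` are the unions of one of `G`
and one of `H`, and `σ_{G∇H} = σ_G σ_H`.
-/

open Finset

namespace Finpartition

variable {α β : Type*} [Fintype α] [DecidableEq α]

lemma image_part_univ (P : Finpartition (univ : Finset α)) : univ.image P.part = P.parts := by
  ext p
  simp only [mem_image, mem_univ, true_and]
  refine ⟨fun ⟨a, ha⟩ => ha ▸ P.part_mem.2 (mem_univ a), fun hp => ?_⟩
  obtain ⟨a, -, ha⟩ := P.part_surjOn hp
  exact ⟨a, ha⟩

lemma part_eq_part_iff_mem (P : Finpartition (univ : Finset α)) {a b : α} :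
    P.part a = P.part b ↔ a ∈ P.part b :=
  (P.mem_part_iff_part_eq_part (mem_univ a) (mem_univ b)).symm

lemma ext_of_part_eq_part_iff {P Q : Finpartition (univ : Finset α)}
    (h : ∀ a b, P.part a = P.part b ↔ Q.part a = Q.part b) : P = Q := by
  have hpart : P.part = Q.part := by
    ext a b
    rw [← part_eq_part_iff_mem, ← part_eq_part_iff_mem, h]
  rw [Finpartition.ext_iff, ← image_part_univ, ← image_part_univ, hpart]

def ker [DecidableEq β] (f : α → β) : Finpartition (univ : Finset α) :=
  @ofSetoid _ _ _ (Setoid.ker f) fun a b => decEq (f a) (f b)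

variable [DecidableEq β]

lemma part_ker_eq_part_iff {f : α → β} {a b : α} :
    (ker f).part a = (ker f).part b ↔ f a = f b := by
  rw [part_eq_part_iff_mem, ker, mem_part_ofSetoid_iff_rel]
  exact eq_comm

lemma ker_eq_iff {f : α → β} {P : Finpartition (univ : Finset α)} :
    ker f = P ↔ ∀ a b, f a = f b ↔ P.part a = P.part b := by
  refine ⟨fun h a b => ?_, fun h => ext_of_part_eq_part_iff fun a b => ?_⟩
  · rw [← h, part_ker_eq_part_iff]
  · rw [part_ker_eq_part_iff, h]

lemma card_parts_ker (f : α → β) : #(ker f).parts = #(univ.image f) := by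
  have hparts : (ker f).parts = (univ.image f).image fun c => ({b | c = f b} : Finset α) := by
    rw [image_image]; rfl
  rw [hparts]
  refine card_image_of_injOn fun c hc d hd hcd => ?_
  obtain ⟨a, -, rfl⟩ := mem_image.1 hc
  have : a ∈ ({b | d = f b} : Finset α) := hcd ▸ by simp
  exact (by simpa using this : d = f a).symm

variable [Fintype β]

/-- The maps with fibre partition `P` are the injections `P.parts ↪ β` composed with `P.part`. -/
lemma card_filter_ker_eq (P : Finpartition (univ : Finset α)) :
    #{f : α → β | ker f = P} = (Fintype.card β).descFactorial #P.parts := by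
  let lift : (P.parts ↪ β) → α → β := fun g a => g ⟨P.part a, P.part_mem.2 (mem_univ a)⟩
  have lift_injective : Function.Injective lift := by
    intro g g' h
    ext ⟨p, hp⟩
    obtain ⟨a, -, rfl⟩ := P.part_surjOn hp
    exact congr_fun h a
  have fibre_eq : ({f | ker f = P} : Finset (α → β)) = univ.image lift := by
    ext f
    simp only [mem_filter, mem_univ, true_and, mem_image, ker_eq_iff]
    constructor
    · intro hf
      have : ∀ p : P.parts, ∃ a, P.part a = p := fun p =>
        let ⟨a, _, ha⟩ := P.part_surjOn p.2; ⟨a, ha⟩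
      choose rep hrep using this
      refine ⟨⟨fun p => f (rep p), fun p q h => Subtype.ext ?_⟩, funext fun a => ?_⟩
      · rw [← hrep p, ← hrep q]; exact (hf _ _).1 h
      · exact (hf _ _).2 (hrep _)
    · rintro ⟨g, rfl⟩ a b
      simp [lift, g.injective.eq_iff]
  rw [fibre_eq, card_image_of_injective _ lift_injective, card_univ, Fintype.card_embedding_eq,
    Fintype.card_coe]

lemma card_fun_eq_sum_descFactorial :
    Fintype.card β ^ Fintype.card α =
      ∑ P : Finpartition (univ : Finset α), (Fintype.card β).descFactorial #P.parts := by
  rw [← Fintype.card_fun, ← card_univ,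
    card_eq_sum_card_fiberwise (f := ker) (t := univ) fun _ _ => mem_univ _]
  exact sum_congr rfl fun P _ => card_filter_ker_eq P

def comap (e : α → β) (R : Finpartition (univ : Finset β)) : Finpartition (univ : Finset α) :=
  ker (R.part ∘ e)

lemma part_comap_eq_part_iff {e : α → β} {R : Finpartition (univ : Finset β)} {a b : α} :
    (R.comap e).part a = (R.comap e).part b ↔ R.part (e a) = R.part (e b) :=
  part_ker_eq_part_iff

def sum (P : Finpartition (univ : Finset α)) (Q : Finpartition (univ : Finset β)) :
    Finpartition (univ : Finset (α ⊕ β)) :=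
  ker (Sum.map P.part Q.part)

variable (P : Finpartition (univ : Finset α)) (Q : Finpartition (univ : Finset β))

lemma part_sum_eq_part_iff {x y : α ⊕ β} :
    (P.sum Q).part x = (P.sum Q).part y ↔ Sum.map P.part Q.part x = Sum.map P.part Q.part y :=
  part_ker_eq_part_iff

lemma comap_inl_sum : (P.sum Q).comap Sum.inl = P :=
  ext_of_part_eq_part_iff fun a b => by simp [part_comap_eq_part_iff, part_sum_eq_part_iff]

lemma comap_inr_sum : (P.sum Q).comap Sum.inr = Q :=
  ext_of_part_eq_part_iff fun a b => by simp [part_comap_eq_part_iff, part_sum_eq_part_iff]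

lemma card_parts_sum : #(P.sum Q).parts = #P.parts + #Q.parts := by
  have : univ.image (Sum.map P.part Q.part) =
      (univ.image P.part).disjSum (univ.image Q.part) := by
    ext (p | q) <;> simp
  rw [sum, card_parts_ker, this, card_disjSum, image_part_univ, image_part_univ]

end Finpartition

namespace SimpleGraph

open Finpartition

variable {α β : Type*} [Fintype α] [DecidableEq α] [Fintype β] [DecidableEq β]

open Classical in
noncomputable def indepPartitions (G : SimpleGraph α) : Finset (Finpartition (univ : Finset α)) :=
  {P | ∀ ⦃a b⦄, G.Adj a b → P.part a ≠ P.part b}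

variable {G : SimpleGraph α}

lemma mem_indepPartitions {P : Finpartition (univ : Finset α)} :
    P ∈ G.indepPartitions ↔ ∀ ⦃a b⦄, G.Adj a b → P.part a ≠ P.part b := by
  simp [indepPartitions]

omit [Fintype β] in
lemma ker_mem_indepPartitions {f : α → β} :
    ker f ∈ G.indepPartitions ↔ ∀ ⦃a b⦄, G.Adj a b → f a ≠ f b := by
  simp only [mem_indepPartitions, ne_eq, part_ker_eq_part_iff]

lemma comap_mem_indepPartitions {G' : SimpleGraph β} (e : G →g G')
    {R : Finpartition (univ : Finset β)} (hR : R ∈ G'.indepPartitions) :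
    R.comap e ∈ G.indepPartitions :=
  ker_mem_indepPartitions.2 fun _ _ hab => mem_indepPartitions.1 hR (e.map_adj hab)

/-- A proper colouring is determined by its partition into colour classes, which is independent,
together with an injective assignment of colours to the classes. -/
lemma card_coloring_eq_sum_indepPartitions (G : SimpleGraph α) :
    Nat.card (G.Coloring β) =
      ∑ P ∈ G.indepPartitions, (Fintype.card β).descFactorial #P.parts := by
  classical
  let e : G.Coloring β ≃ {f : α → β // ∀ ⦃a b⦄, G.Adj a b → f a ≠ f b} :=
    { toFun c := ⟨c, fun _ _ => c.valid⟩
      invFun f := Coloring.mk f.1 fun h => f.2 h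
      left_inv _ := rfl
      right_inv _ := rfl }
  rw [Nat.card_congr e, Nat.card_eq_fintype_card, Fintype.card_subtype,
    card_eq_sum_card_fiberwise fun f hf => ker_mem_indepPartitions.2 (mem_filter.1 hf).2]
  refine sum_congr rfl fun P hP => ?_
  rw [filter_filter, ← card_filter_ker_eq P]
  congr 1
  refine filter_congr fun f _ => and_iff_right_of_imp fun hf => ?_
  exact ker_mem_indepPartitions.1 (hf ▸ hP)

end SimpleGraph

lemma Polynomial.eq_of_eval_natCast_eq {R : Type*} [CommRing R] [IsDomain R] [CharZero R]
    {p q : R[X]} (h : ∀ n : ℕ, p.eval (n : R) = q.eval (n : R)) : p = q :=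
  eq_of_infinite_eval_eq p q (Set.infinite_of_injective_forall_mem Nat.cast_injective h)

lemma prod_range_X_sub_C_eq_descPochhammer {R : Type*} [CommRing R] (n : ℕ) :
    ∏ i ∈ range n, (X - C (i : R)) = descPochhammer R n := by
  induction n with
  | zero => simp
  | succ n ih => rw [prod_range_succ, ih, descPochhammer_succ_right, C_eq_natCast]

noncomputable def phiChiLinearMap : ℚ[X] →ₗ[ℚ] ℚ[X] :=
  lsum fun n => LinearMap.id.smulRight (descPochhammer ℚ n)

lemma coe_phiChiLinearMap : ⇑phiChiLinearMap = phiChi := by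
  ext1 p
  simp only [phiChiLinearMap, lsum_apply, LinearMap.smulRight_apply, LinearMap.id_apply, phiChi,
    prod_range_X_sub_C_eq_descPochhammer]

lemma phiChi_monomial (n : ℕ) (a : ℚ) : phiChi (monomial n a) = a • descPochhammer ℚ n := by
  rw [← coe_phiChiLinearMap]
  simp [phiChiLinearMap]

lemma phiChi_X_pow (n : ℕ) : phiChi (X ^ n) = descPochhammer ℚ n := by
  rw [← monomial_one_right_eq_X_pow, phiChi_monomial, one_smul]

lemma phiChi_sum {ι : Type*} (s : Finset ι) (f : ι → ℚ[X]) :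
    phiChi (∑ i ∈ s, f i) = ∑ i ∈ s, phiChi (f i) := by
  rw [← coe_phiChiLinearMap, map_sum]

lemma eval_phiChi_sum_X_pow {ι : Type*} (s : Finset ι) (k : ι → ℕ) (t : ℕ) :
    (phiChi (∑ i ∈ s, X ^ k i)).eval (t : ℚ) = ∑ i ∈ s, (t.descFactorial (k i) : ℚ) := by
  simp only [phiChi_sum, phiChi_X_pow, eval_finsetSum, descPochhammer_eval_eq_descFactorial]

lemma coeff_phiChi_natDegree (p : ℚ[X]) : (phiChi p).coeff p.natDegree = p.leadingCoeff := by
  have hlower : ∀ i ∈ range p.natDegree, (descPochhammer ℚ i).coeff p.natDegree = 0 :=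
    fun i hi => coeff_eq_zero_of_natDegree_lt (by simpa [descPochhammer_natDegree] using hi)
  have htop : (descPochhammer ℚ p.natDegree).coeff p.natDegree = 1 := by
    simpa [descPochhammer_natDegree] using (monic_descPochhammer ℚ p.natDegree).coeff_natDegree
  have hp : phiChi p = ∑ i ∈ range (p.natDegree + 1), p.coeff i • descPochhammer ℚ i := by
    conv_lhs => rw [p.as_sum_range' _ (Nat.lt_succ_self _)]
    simp only [phiChi_sum, phiChi_monomial]
  rw [hp, finsetSum_coeff, sum_range_succ, coeff_smul, htop, smul_eq_mul, mul_one,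
    sum_eq_zero fun i hi => by rw [coeff_smul, hlower i hi, smul_zero], zero_add]
  rfl

lemma phiChi_injective : Function.Injective phiChi := by
  rw [← coe_phiChiLinearMap, injective_iff_map_eq_zero]
  intro p hp
  by_contra hp0
  have := coeff_phiChi_natDegree p
  rw [← coe_phiChiLinearMap, hp, coeff_zero] at this
  exact leadingCoeff_ne_zero.2 hp0 this.symm

lemma stirling2_eq_card (n k : ℕ) :
    stirling2 n k = #{P : Finpartition (univ : Finset (Fin n)) | #P.parts = k} := by
  rw [stirling2, ← Fintype.card_subtype, ← Nat.card_eq_fintype_card]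
  exact Nat.card_congr
    { toFun S := ⟨.ofExistsUnique S.1 (fun _ _ => subset_univ _) (fun a _ => S.2.2.2 a)
        fun h => not_nonempty_empty (S.2.2.1 _ h), S.2.1⟩
      invFun P := ⟨P.1.parts, P.2, fun _ => P.1.nonempty_of_mem_parts,
        fun a => P.1.existsUnique_mem (mem_univ a)⟩
      left_inv _ := rfl
      right_inv _ := Subtype.ext (Finpartition.ext rfl) }

lemma phiChiInv_monomial (n : ℕ) (a : ℚ) :
    phiChiInv (monomial n a) =
      a • ∑ P : Finpartition (univ : Finset (Fin n)), X ^ #P.parts := by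
  have hcard : ∀ P : Finpartition (univ : Finset (Fin n)), #P.parts ∈ range (n + 1) := fun P =>
    mem_range_succ_iff.2 (by simpa using P.card_parts_le_card)
  rw [phiChiInv, sum_monomial_index _ _ (by simp),
    ← sum_fiberwise_of_maps_to (fun P _ => hcard P)]
  congr 1
  refine sum_congr rfl fun k _ => ?_
  rw [sum_congr rfl fun P hP => by rw [(mem_filter.1 hP).2], sum_const, stirling2_eq_card,
    Nat.cast_smul_eq_nsmul]

lemma phiChi_sum_X_pow_card_parts (n : ℕ) :
    phiChi (∑ P : Finpartition (univ : Finset (Fin n)), X ^ #P.parts) = X ^ n :=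
  Polynomial.eq_of_eval_natCast_eq fun t => by
    have := Finpartition.card_fun_eq_sum_descFactorial (α := Fin n) (β := Fin t)
    simp only [Fintype.card_fin] at this
    rw [eval_phiChi_sum_X_pow, eval_pow, eval_X, ← Nat.cast_sum, ← this, Nat.cast_pow]

lemma phiChi_phiChiInv (p : ℚ[X]) : phiChi (phiChiInv p) = p := by
  induction p using Polynomial.induction_on' with
  | add p q hp hq =>
    rw [phiChiInv, sum_add_index _ _ _ (by simp) (by simp [add_smul]), ← phiChiInv,
      ← phiChiInv, ← coe_phiChiLinearMap, map_add, coe_phiChiLinearMap, hp, hq]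
  | monomial n a =>
    rw [phiChiInv_monomial, ← coe_phiChiLinearMap, map_smul, coe_phiChiLinearMap,
      phiChi_sum_X_pow_card_parts, smul_X_eq_monomial]

lemma phiChiInv_phiChi (p : ℚ[X]) : phiChiInv (phiChi p) = p :=
  phiChi_injective (phiChi_phiChiInv _)

namespace SimpleGraph

open Finpartition

variable {α : Type*} [Fintype α] [DecidableEq α]

noncomputable def indepPartitionPoly (G : SimpleGraph α) : ℚ[X] :=
  ∑ P ∈ G.indepPartitions, X ^ #P.parts

lemma eq_phiChi_indepPartitionPoly (G : SimpleGraph α) {P : ℚ[X]}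
    (hP : ∀ t : ℕ, P.eval (t : ℚ) = colorCount G t) : P = phiChi G.indepPartitionPoly :=
  Polynomial.eq_of_eval_natCast_eq fun t => by
    rw [hP, indepPartitionPoly, eval_phiChi_sum_X_pow, colorCount,
      card_coloring_eq_sum_indepPartitions, Fintype.card_fin, Nat.cast_sum]

variable {V W : Type*} [Fintype V] [Fintype W] [DecidableEq V] [DecidableEq W]
  {G : SimpleGraph V} {H : SimpleGraph W}

def joinInl : G →g graphJoin G H := ⟨Sum.inl, id⟩

def joinInr : H →g graphJoin G H := ⟨Sum.inr, id⟩

lemma sum_mem_indepPartitions_graphJoin {P : Finpartition (univ : Finset V)}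
    {Q : Finpartition (univ : Finset W)} (hP : P ∈ G.indepPartitions)
    (hQ : Q ∈ H.indepPartitions) : P.sum Q ∈ (graphJoin G H).indepPartitions := by
  refine ker_mem_indepPartitions.2 ?_
  rintro (a | a) (b | b) hab
  exacts [by simpa using mem_indepPartitions.1 hP hab, by simp, by simp,
    by simpa using mem_indepPartitions.1 hQ hab]

/-- Every independent set of `graphJoin G H` lies on one side. -/
lemma sum_comap_inl_comap_inr {R : Finpartition (univ : Finset (V ⊕ W))}
    (hR : R ∈ (graphJoin G H).indepPartitions) :
    (R.comap Sum.inl).sum (R.comap Sum.inr) = R := by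
  have hlr : ∀ a b, R.part (.inl a) ≠ R.part (.inr b) := fun a b =>
    mem_indepPartitions.1 hR (show (graphJoin G H).Adj (.inl a) (.inr b) from trivial)
  refine ext_of_part_eq_part_iff ?_
  rintro (a | a) (b | b)
  · simp [part_sum_eq_part_iff, part_comap_eq_part_iff]
  · simpa [part_sum_eq_part_iff] using hlr a b
  · simpa [part_sum_eq_part_iff] using (hlr b a).symm
  · simp [part_sum_eq_part_iff, part_comap_eq_part_iff]

lemma indepPartitionPoly_graphJoin :
    (graphJoin G H).indepPartitionPoly = G.indepPartitionPoly * H.indepPartitionPoly := by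
  rw [indepPartitionPoly, indepPartitionPoly, indepPartitionPoly, sum_mul_sum, ← sum_product']
  refine sum_nbij' (fun R => (R.comap Sum.inl, R.comap Sum.inr)) (fun PQ => PQ.1.sum PQ.2)
    (fun R hR => mem_product.2 ⟨comap_mem_indepPartitions joinInl hR,
      comap_mem_indepPartitions joinInr hR⟩)
    (fun PQ hPQ => sum_mem_indepPartitions_graphJoin (mem_product.1 hPQ).1 (mem_product.1 hPQ).2)
    (fun R hR => sum_comap_inl_comap_inr hR) (fun PQ _ => ?_) (fun R hR => ?_)
  · exact Prod.ext (comap_inl_sum _ _) (comap_inr_sum _ _)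
  · rw [← pow_add, ← card_parts_sum, sum_comap_inl_comap_inr hR]

end SimpleGraph

theorem chromaticPoly_join_general {V W : Type*} [Fintype V] [Fintype W]
    (G : SimpleGraph V) (H : SimpleGraph W)
    (P Q R : Polynomial ℚ)
    (hP : ∀ t : ℕ, P.eval (t : ℚ) = colorCount G t)
    (hQ : ∀ t : ℕ, Q.eval (t : ℚ) = colorCount H t)
    (hR : ∀ t : ℕ, R.eval (t : ℚ) = colorCount (graphJoin G H) t) :
    R = phiChi (phiChiInv P * phiChiInv Q) := by
  classical
  rw [G.eq_phiChi_indepPartitionPoly hP, H.eq_phiChi_indepPartitionPoly hQ,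
    (graphJoin G H).eq_phiChi_indepPartitionPoly hR, phiChiInv_phiChi, phiChiInv_phiChi,
    SimpleGraph.indepPartitionPoly_graphJoin]

/-- `χ_{G∇H} = φ_χ[φ_χ⁻¹[χ_G]·φ_χ⁻¹[χ_H]]`, where the chromatic polynomials
are characterized by their values at natural numbers. -/
theorem chromaticPoly_join {V W : Type*} [Fintype V] [Fintype W]
    [DecidableEq V] [DecidableEq W] (G : SimpleGraph V) (H : SimpleGraph W)
    (P Q R : Polynomial ℚ)
    (hP : ∀ t : ℕ, P.eval (t : ℚ) = colorCount G t)
    (hQ : ∀ t : ℕ, Q.eval (t : ℚ) = colorCount H t)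
    (hR : ∀ t : ℕ, R.eval (t : ℚ) = colorCount (graphJoin G H) t) :
    R = phiChi (phiChiInv P * phiChiInv Q) :=
  chromaticPoly_join_general G H P Q R hP hQ hR
end

section
/- Let G and H be simple graphs on disjoint vertex sets, with m(·) denoting the number of perfect matchings. Then m(G ∇ H)² ≤ m(G ∇ G) · m(H ∇ H), where G ∇ G denotes the join of two disjoint copies of G (and similarly for H). -/
/-- `m(G)`: the number of perfect matchings of `G`. -/
noncomputable def perfectMatchingCount {V : Type*} (G : SimpleGraph V) : ℕ :=
  Nat.card {M : G.Subgraph // M.IsPerfectMatching}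

open Finset Nat SimpleGraph

theorem Nat.card_equiv_eq_ite (α β : Type*) [Finite α] [Finite β] :
    Nat.card (α ≃ β) = if Nat.card α = Nat.card β then (Nat.card α)! else 0 := by
  split_ifs with h
  · obtain ⟨e⟩ := Finite.card_eq.mp h
    rw [← Nat.card_perm, Nat.card_congr (Equiv.equivCongr (Equiv.refl α) e)]
  · have : IsEmpty (α ≃ β) := ⟨fun e => h (Nat.card_congr e)⟩
    exact Nat.card_of_isEmpty

theorem Finset.sum_sum_ite_eq_sum_card_mul_card {α β : Type*} [Fintype α] [Fintype β]
    (f : α → ℕ) (g : β → ℕ) (w : ℕ → ℕ) {N : ℕ} (hf : ∀ a, f a < N) :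
    ∑ a, ∑ b, (if f a = g b then w (f a) else 0) =
      ∑ d ∈ range N, #{a | f a = d} * #{b | g b = d} * w d := by
  classical
  calc ∑ a, ∑ b, (if f a = g b then w (f a) else 0)
      = ∑ a, #{b | g b = f a} * w (f a) := by
        refine sum_congr rfl fun a _ => ?_
        rw [← sum_filter, sum_const, smul_eq_mul]
        simp_rw [eq_comm]
    _ = ∑ d ∈ range N, #{a | f a = d} * (#{b | g b = d} * w d) := by
        rw [← sum_fiberwise_of_maps_to' (g := f) (fun a _ => mem_range.mpr (hf a))
          (fun d => #{b | g b = d} * w d)]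
        simp_rw [sum_const, smul_eq_mul]
    _ = _ := by simp_rw [mul_assoc]

theorem Nat.card_sigma_prod_equiv {α β : Type*} [Finite α] [Finite β]
    (s : α → Type*) (t : β → Type*) [∀ a, Finite (s a)] [∀ b, Finite (t b)] {N : ℕ}
    (hN : ∀ a, Nat.card (s a) < N) :
    Nat.card (Σ p : α × β, s p.1 ≃ t p.2) =
      ∑ d ∈ range N, Nat.card {a // Nat.card (s a) = d} *
        Nat.card {b // Nat.card (t b) = d} * d ! := by
  classical
  have := Fintype.ofFinite α
  have := Fintype.ofFinite β
  simp only [Nat.card_sigma, Fintype.sum_prod_type, Nat.card_equiv_eq_ite,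
    sum_sum_ite_eq_sum_card_mul_card _ _ _ hN, Nat.card_eq_fintype_card, Fintype.card_subtype]

namespace graphJoin

variable {V W : Type*} {G : SimpleGraph V} {H : SimpleGraph W}

def subgraphOfEquiv (A : G.Subgraph) (B : H.Subgraph) (e : ↥A.vertsᶜ ≃ ↥B.vertsᶜ) :
    (graphJoin G H).Subgraph where
  verts := Set.univ
  Adj x y := match x, y with
    | .inl a, .inl a' => A.Adj a a'
    | .inr b, .inr b' => B.Adj b b'
    | .inl a, .inr b => ∃ ha : a ∈ A.vertsᶜ, (e ⟨a, ha⟩ : W) = b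
    | .inr b, .inl a => ∃ ha : a ∈ A.vertsᶜ, (e ⟨a, ha⟩ : W) = b
  adj_sub := by
    rintro (a | b) (a' | b') h
    exacts [A.adj_sub h, trivial, trivial, B.adj_sub h]
  edge_vert _ := Set.mem_univ _
  symm := ⟨by
    rintro (a | b) (a' | b') h
    exacts [A.adj_symm h, h, h, B.adj_symm h]⟩

theorem isPerfectMatching_subgraphOfEquiv {A : G.Subgraph} {B : H.Subgraph}
    (hA : A.IsMatching) (hB : B.IsMatching) (e : ↥A.vertsᶜ ≃ ↥B.vertsᶜ) :
    (subgraphOfEquiv A B e).IsPerfectMatching := by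
  rw [Subgraph.isPerfectMatching_iff]
  rintro (a | b)
  · by_cases ha : a ∈ A.verts
    · obtain ⟨a', ha', huniq⟩ := hA ha
      refine ⟨.inl a', ha', ?_⟩
      rintro (c | c) hc
      · exact congrArg Sum.inl (huniq c hc)
      · exact absurd ha hc.1
    · refine ⟨.inr (e ⟨a, ha⟩), ⟨ha, rfl⟩, ?_⟩
      rintro (c | c) hc
      · exact absurd (A.edge_vert hc) ha
      · obtain ⟨-, rfl⟩ := hc
        rfl
  · by_cases hb : b ∈ B.verts
    · obtain ⟨b', hb', huniq⟩ := hB hb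
      refine ⟨.inr b', hb', ?_⟩
      rintro (c | c) hc
      · exact absurd hb (hc.2 ▸ (e _).2)
      · exact congrArg Sum.inr (huniq c hc)
    · refine ⟨.inl (e.symm ⟨b, hb⟩), ⟨(e.symm ⟨b, hb⟩).2, by simp⟩, ?_⟩
      rintro (c | c) hc
      · obtain ⟨_, rfl⟩ := hc
        simp
      · exact absurd (B.edge_vert hc) hb

def leftPart (M : (graphJoin G H).Subgraph) : G.Subgraph where
  verts := {a | ∃ a', M.Adj (.inl a) (.inl a')}
  Adj a a' := M.Adj (.inl a) (.inl a')
  adj_sub h := M.adj_sub h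
  edge_vert h := ⟨_, h⟩
  symm := ⟨fun _ _ h => M.adj_symm h⟩

def rightPart (M : (graphJoin G H).Subgraph) : H.Subgraph where
  verts := {b | ∃ b', M.Adj (.inr b) (.inr b')}
  Adj b b' := M.Adj (.inr b) (.inr b')
  adj_sub h := M.adj_sub h
  edge_vert h := ⟨_, h⟩
  symm := ⟨fun _ _ h => M.adj_symm h⟩

theorem leftPart_subgraphOfEquiv {A : G.Subgraph} (hA : A.IsMatching) (B : H.Subgraph)
    (e : ↥A.vertsᶜ ≃ ↥B.vertsᶜ) : leftPart (subgraphOfEquiv A B e) = A :=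
  Subgraph.ext hA.support_eq_verts rfl

theorem rightPart_subgraphOfEquiv (A : G.Subgraph) {B : H.Subgraph} (hB : B.IsMatching)
    (e : ↥A.vertsᶜ ≃ ↥B.vertsᶜ) : rightPart (subgraphOfEquiv A B e) = B :=
  Subgraph.ext hB.support_eq_verts rfl

variable {M : (graphJoin G H).Subgraph}

theorem isMatching_leftPart (hM : M.IsMatching) : (leftPart M).IsMatching := by
  rintro a ⟨a', ha'⟩
  exact ⟨a', ha', fun c hc => Sum.inl.inj (hM.eq_of_adj_left hc ha')⟩

theorem isMatching_rightPart (hM : M.IsMatching) : (rightPart M).IsMatching := by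
  rintro b ⟨b', hb'⟩
  exact ⟨b', hb', fun c hc => Sum.inr.inj (hM.eq_of_adj_left hc hb')⟩

theorem notMem_leftPart_of_adj (hM : M.IsMatching) {a : V} {b : W}
    (h : M.Adj (.inl a) (.inr b)) : a ∉ (leftPart M).verts := by
  rintro ⟨a', ha'⟩
  simpa using hM.eq_of_adj_left ha' h

theorem notMem_rightPart_of_adj (hM : M.IsMatching) {a : V} {b : W}
    (h : M.Adj (.inl a) (.inr b)) : b ∉ (rightPart M).verts := by
  rintro ⟨b', hb'⟩
  simpa using hM.eq_of_adj_left hb' h.symm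

theorem exists_adj_of_notMem_leftPart (hM : M.IsPerfectMatching) {a : V}
    (ha : a ∉ (leftPart M).verts) : ∃ b, M.Adj (.inl a) (.inr b) := by
  obtain ⟨_ | b, hab, -⟩ := hM.1 (hM.2 (.inl a))
  exacts [absurd ⟨_, hab⟩ ha, ⟨b, hab⟩]

theorem exists_adj_of_notMem_rightPart (hM : M.IsPerfectMatching) {b : W}
    (hb : b ∉ (rightPart M).verts) : ∃ a, M.Adj (.inl a) (.inr b) := by
  obtain ⟨a | _, hab, -⟩ := hM.1 (hM.2 (.inr b))
  exacts [⟨a, hab.symm⟩, absurd ⟨_, hab⟩ hb]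

noncomputable def crossMap (hM : M.IsPerfectMatching) (a : ↥(leftPart M).vertsᶜ) :
    ↥(rightPart M).vertsᶜ :=
  ⟨_, notMem_rightPart_of_adj hM.1 (exists_adj_of_notMem_leftPart hM a.2).choose_spec⟩

theorem crossMap_eq_iff_adj (hM : M.IsPerfectMatching) (a : ↥(leftPart M).vertsᶜ) (b : W) :
    (crossMap hM a : W) = b ↔ M.Adj (.inl a) (.inr b) :=
  ⟨fun h => h ▸ (exists_adj_of_notMem_leftPart hM a.2).choose_spec,
    fun h => Sum.inr.inj (hM.1.eq_of_adj_left
      (exists_adj_of_notMem_leftPart hM a.2).choose_spec h)⟩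

theorem crossMap_bijective (hM : M.IsPerfectMatching) : Function.Bijective (crossMap hM) := by
  refine ⟨fun a a' h => ?_, fun b => ?_⟩
  · have ha := (crossMap_eq_iff_adj hM a _).mp rfl
    rw [h] at ha
    exact Subtype.ext (Sum.inl.inj (hM.1.eq_of_adj_right ha
      ((crossMap_eq_iff_adj hM a' _).mp rfl)))
  · obtain ⟨a, hab⟩ := exists_adj_of_notMem_rightPart hM b.2
    exact ⟨⟨a, notMem_leftPart_of_adj hM.1 hab⟩,
      Subtype.ext ((crossMap_eq_iff_adj hM _ _).mpr hab)⟩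

theorem subgraphOfEquiv_crossMap (hM : M.IsPerfectMatching) :
    subgraphOfEquiv (leftPart M) (rightPart M) (.ofBijective _ (crossMap_bijective hM)) = M := by
  have hcross : ∀ a b,
      (∃ ha : a ∈ (leftPart M).vertsᶜ, (crossMap hM ⟨a, ha⟩ : W) = b) ↔
        M.Adj (.inl a) (.inr b) := fun a b =>
    ⟨fun ⟨_, h⟩ => (crossMap_eq_iff_adj hM _ b).mp h,
      fun h => ⟨notMem_leftPart_of_adj hM.1 h, (crossMap_eq_iff_adj hM _ b).mpr h⟩⟩
  refine Subgraph.ext hM.2.verts_eq_univ.symm ?_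
  funext x y
  rcases x with a | b <;> rcases y with a' | b'
  · rfl
  · exact propext (hcross a b')
  · exact propext ((hcross a' b).trans (M.adj_comm _ _))
  · rfl

variable (G H) in
def ofMatchings
    (x : Σ p : {A : G.Subgraph // A.IsMatching} × {B : H.Subgraph // B.IsMatching},
      ↥p.1.1.vertsᶜ ≃ ↥p.2.1.vertsᶜ) :
    {M : (graphJoin G H).Subgraph // M.IsPerfectMatching} :=
  ⟨subgraphOfEquiv x.1.1.1 x.1.2.1 x.2, isPerfectMatching_subgraphOfEquiv x.1.1.2 x.1.2.2 x.2⟩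

theorem ofMatchings_injective : Function.Injective (ofMatchings G H) := by
  rintro ⟨⟨⟨A, hA⟩, ⟨B, hB⟩⟩, e⟩ ⟨⟨⟨A', hA'⟩, ⟨B', hB'⟩⟩, e'⟩ h
  have h : subgraphOfEquiv A B e = subgraphOfEquiv A' B' e' := congrArg Subtype.val h
  obtain rfl : A = A' := by
    rw [← leftPart_subgraphOfEquiv hA B e, h, leftPart_subgraphOfEquiv hA' B' e']
  obtain rfl : B = B' := by
    rw [← rightPart_subgraphOfEquiv A hB e, h, rightPart_subgraphOfEquiv A hB' e']
  obtain rfl : e = e' := by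
    ext a
    have hadj : (subgraphOfEquiv A B e').Adj (.inl a) (.inr (e a)) := h ▸ ⟨a.2, rfl⟩
    exact hadj.2.symm
  rfl

theorem ofMatchings_surjective : Function.Surjective (ofMatchings G H) := fun ⟨_, hM⟩ =>
  ⟨⟨(⟨_, isMatching_leftPart hM.1⟩, ⟨_, isMatching_rightPart hM.1⟩), _⟩,
    Subtype.ext (subgraphOfEquiv_crossMap hM)⟩

end graphJoin

noncomputable def matchingCount {V : Type*} (G : SimpleGraph V) (d : ℕ) : ℕ :=
  Nat.card {A : G.Subgraph // A.IsMatching ∧ Nat.card ↥A.vertsᶜ = d}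

theorem perfectMatchingCount_graphJoin {V W : Type*} [Finite V] [Finite W]
    (G : SimpleGraph V) (H : SimpleGraph W) {N : ℕ} (hN : Nat.card V < N) :
    perfectMatchingCount (graphJoin G H) =
      ∑ d ∈ range N, matchingCount G d * matchingCount H d * d ! := by
  have hcard (A : {A : G.Subgraph // A.IsMatching}) : Nat.card ↥A.1.vertsᶜ < N :=
    (Nat.card_le_card_of_injective _ Subtype.val_injective).trans_lt hN
  rw [perfectMatchingCount, ← Nat.card_eq_of_bijective _
    ⟨graphJoin.ofMatchings_injective, graphJoin.ofMatchings_surjective⟩]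
  refine (Nat.card_sigma_prod_equiv _ (fun B : {B : H.Subgraph // B.IsMatching} => ↥B.1.vertsᶜ)
    hcard).trans ?_
  simp only [matchingCount, ← Nat.card_congr (Equiv.subtypeSubtypeEquivSubtypeInter
    Subgraph.IsMatching fun A => Nat.card ↥A.vertsᶜ = _)]

theorem perfectMatchingCount_join_sq_le_general {V W : Type*} [Fintype V] [Fintype W]
    (G : SimpleGraph V) (H : SimpleGraph W) :
    perfectMatchingCount (graphJoin G H) ^ 2 ≤
      perfectMatchingCount (graphJoin G G) * perfectMatchingCount (graphJoin H H) := by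
  have hV : Nat.card V < Nat.card V + Nat.card W + 1 := by omega
  have hW : Nat.card W < Nat.card V + Nat.card W + 1 := by omega
  rw [perfectMatchingCount_graphJoin G H hV, perfectMatchingCount_graphJoin G G hV,
    perfectMatchingCount_graphJoin H H hW]
  exact sum_sq_le_sum_mul_sum_of_sq_le_mul _ (fun _ _ => Nat.zero_le _)
    (fun _ _ => Nat.zero_le _) (fun _ _ => (by ring : _ = _).le)

/-- Cauchy–Schwarz inequality for perfect matchings of joins:
`m(G ∇ H)² ≤ m(G ∇ G)·m(H ∇ H)`. -/
theorem perfectMatchingCount_join_sq_le {V W : Type*} [Fintype V] [Fintype W]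
    [DecidableEq V] [DecidableEq W] (G : SimpleGraph V) (H : SimpleGraph W) :
    perfectMatchingCount (graphJoin G H) ^ 2 ≤
      perfectMatchingCount (graphJoin G G) * perfectMatchingCount (graphJoin H H) :=
  perfectMatchingCount_join_sq_le_general G H
end
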